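/- Let n >= 4 be even, and let S = {a_1, ..., a_n} be a smooth multiset of nonnegative integers with at least two a_i positive. Then there exist nonnegative integers t_1, ..., t_n with t_i >= a_i for all i such that the nim-sum of t_1, ..., t_n is 0 and the nim-sum of (t_1 - a_1), ..., (t_n - a_n) is 0. -/

import Mathlib

/-!
Writing `a = 2 ^ k * b`, it suffices to find `x` with `nimSum x = 0` and `nimSum (b + x) = 0`,
where `b` has an odd entry and `nimSum b ≡ 0 [MOD 4]`. We build `x` from its lowest bit up. If
the lowest bits `ε` of `x` contain an even number of ones and `b` an even number of odd entries,
then the lowest bits of `b + x` also contain an even number of ones, and the problem passes to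
`(b + ε) / 2`. At an odd entry `bᵢ` the bit `εᵢ` picks the parity of `(bᵢ + εᵢ) / 2` freely; at an
even entry it does not change `(bᵢ + εᵢ) / 2`, so an even entry can fix the parity of `ε`. This keeps
the number of odd entries even and between `2` and `n - 2` until all entries are `≤ 1`. If all
entries of `b` are odd, bit `1` of `nimSum b` being zero makes the first step possible instead.
-/

/-- The nim-sum (bitwise XOR) of a list of naturals. -/
def nimSum (l : List ℕ) : ℕ := l.foldr (· ^^^ ·) 0

theorem nimSum_map {φ : ℕ → ℕ} (h0 : φ 0 = 0) (hxor : ∀ a b, φ (a ^^^ b) = φ a ^^^ φ b)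
    (l : List ℕ) : nimSum (l.map φ) = φ (nimSum l) := by
  induction l with
  | nil => exact h0.symm
  | cons a l ih => simp only [nimSum, List.map_cons, List.foldr_cons] at ih ⊢; rw [ih, hxor]

theorem nimSum_mod_two (l : List ℕ) : nimSum l % 2 = l.sum % 2 := by
  induction l with
  | nil => rfl
  | cons a l ih =>
    simp only [nimSum, List.foldr_cons, List.sum_cons] at ih ⊢
    rw [Nat.xor_mod_two_eq, Nat.add_mod, ih, ← Nat.add_mod]

theorem nimSum_replicate_zero (n : ℕ) : nimSum (List.replicate n 0) = 0 := by
  induction n with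
  | zero => rfl
  | succ n ih => simpa [nimSum, List.replicate_succ] using ih

theorem mod_two_le_one (m : ℕ) : m % 2 ≤ 1 := Nat.lt_succ_iff.mp (Nat.mod_lt m two_pos)

theorem half_add_digit_mod_two {m q : ℕ} (hm : m % 2 = 1) (hq : q ≤ 1) :
    (m + (m / 2 + q) % 2) / 2 % 2 = q := by
  rcases Nat.mod_two_eq_zero_or_one (m / 2 + q) with h | h <;> rw [h] <;> omega

theorem exists_le_sum_eq : ∀ {n : ℕ} (f : Fin n → ℕ) {j : ℕ}, j ≤ ∑ i, f i →
    ∃ g : Fin n → ℕ, (∀ i, g i ≤ f i) ∧ ∑ i, g i = j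
  | 0, _, _, h => ⟨0, fun i => i.elim0, by simp at h ⊢; omega⟩
  | _ + 1, f, j, h => by
    rw [Fin.sum_univ_succ] at h
    obtain ⟨g, hg, hsum⟩ := exists_le_sum_eq (fun i => f i.succ) (j := j - min j (f 0)) (by omega)
    refine ⟨Fin.cons (min j (f 0)) g, Fin.cases (min_le_right _ _) hg, ?_⟩
    rw [Fin.sum_univ_succ]
    simp only [Fin.cons_zero, Fin.cons_succ, hsum]
    omega

section NimZeroDiff

variable {n : ℕ}

theorem nimSum_ofFn_zero : nimSum (List.ofFn (0 : Fin n → ℕ)) = 0 := by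
  rw [show (0 : Fin n → ℕ) = fun _ => 0 from rfl, List.ofFn_const]
  exact nimSum_replicate_zero n

theorem nimSum_ofFn_mod_two (f : Fin n → ℕ) : nimSum (List.ofFn f) % 2 = (∑ i, f i) % 2 := by
  rw [nimSum_mod_two, List.sum_ofFn]

theorem nimSum_ofFn_div_two (f : Fin n → ℕ) :
    nimSum (List.ofFn f) / 2 = nimSum (List.ofFn fun i => f i / 2) := by
  rw [← nimSum_map (φ := (· / 2)) rfl (fun _ _ => Nat.xor_div_two), List.map_ofFn]
  rfl

theorem nimSum_ofFn_two_pow_mul (k : ℕ) (f : Fin n → ℕ) :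
    nimSum (List.ofFn fun i => 2 ^ k * f i) = 2 ^ k * nimSum (List.ofFn f) := by
  have hxor (a b : ℕ) : 2 ^ k * (a ^^^ b) = 2 ^ k * a ^^^ 2 ^ k * b := by
    simp only [mul_comm (2 ^ k), ← Nat.shiftLeft_eq, Nat.shiftLeft_xor_distrib]
  rw [← nimSum_map (φ := (2 ^ k * ·)) (mul_zero _) hxor, List.map_ofFn]
  rfl

theorem nimSum_ofFn_add_two_mul {f : Fin n → ℕ} (hf : ∀ i, f i ≤ 1) (g : Fin n → ℕ) :
    nimSum (List.ofFn fun i => f i + 2 * g i) = (∑ i, f i) % 2 + 2 * nimSum (List.ofFn g) := by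
  have hmod := nimSum_ofFn_mod_two fun i => f i + 2 * g i
  have hdiv := nimSum_ofFn_div_two fun i => f i + 2 * g i
  have hhalf : (fun i => (f i + 2 * g i) / 2) = g := funext fun i => by have := hf i; omega
  rw [Finset.sum_add_distrib, ← Finset.mul_sum] at hmod
  rw [hhalf] at hdiv
  omega

def oddCount (b : Fin n → ℕ) : ℕ := ∑ i, b i % 2

theorem oddCount_mod_two (b : Fin n → ℕ) : oddCount b % 2 = (∑ i, b i) % 2 :=
  (Finset.sum_nat_mod _ _ _).symm

theorem oddCount_le (b : Fin n → ℕ) : oddCount b ≤ n := by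
  simpa [oddCount] using Finset.sum_le_sum fun i (_ : i ∈ Finset.univ) => mod_two_le_one (b i)

theorem oddCount_eq_iff (b : Fin n → ℕ) : oddCount b = n ↔ ∀ i, b i % 2 = 1 := by
  have h := Finset.sum_eq_sum_iff_of_le fun i (_ : i ∈ Finset.univ) => mod_two_le_one (b i)
  simpa [oddCount] using h

def IsNimZeroDiff (b : Fin n → ℕ) : Prop :=
  ∃ x : Fin n → ℕ, nimSum (List.ofFn x) = 0 ∧ nimSum (List.ofFn (b + x)) = 0

theorem isNimZeroDiff_zero : IsNimZeroDiff (0 : Fin n → ℕ) :=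
  ⟨0, nimSum_ofFn_zero, by simpa using nimSum_ofFn_zero⟩

theorem IsNimZeroDiff.of_half {b ε : Fin n → ℕ} (hε : ∀ i, ε i ≤ 1) (hεs : Even (∑ i, ε i))
    (hb : Even (oddCount b)) (h : IsNimZeroDiff fun i => (b i + ε i) / 2) : IsNimZeroDiff b := by
  obtain ⟨x, hx, hbx⟩ := h
  replace hbx : nimSum (List.ofFn fun i => (b i + ε i) / 2 + x i) = 0 := hbx
  refine ⟨fun i => ε i + 2 * x i, ?_, ?_⟩
  · rw [nimSum_ofFn_add_two_mul hε, hx, Nat.even_iff.mp hεs]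
  · have hsplit : b + (fun i => ε i + 2 * x i)
        = fun i => (b i + ε i) % 2 + 2 * ((b i + ε i) / 2 + x i) :=
      funext fun i => by simp only [Pi.add_apply]; omega
    have hpar : (∑ i, (b i + ε i) % 2) % 2 = (∑ i, b i + ∑ i, ε i) % 2 := by
      rw [← Finset.sum_nat_mod, Finset.sum_add_distrib]
    rw [hsplit, nimSum_ofFn_add_two_mul fun i => mod_two_le_one _]
    rw [Nat.even_iff] at hεs hb
    have := oddCount_mod_two b
    omega

theorem exists_next_parities (hn : Even n) (b : Fin n → ℕ) (hO : Even (oddCount b))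
    (h2 : 2 ≤ oddCount b) (hle : oddCount b ≤ n - 2) :
    ∃ q : Fin n → ℕ, (∀ i, q i ≤ 1) ∧ (∀ i, b i % 2 = 0 → q i = b i / 2 % 2) ∧
      Even (∑ i, q i) ∧ 2 ≤ ∑ i, q i ∧ ∑ i, q i ≤ n - 2 := by
  set r : Fin n → ℕ := fun i => if b i % 2 = 0 then b i / 2 % 2 else 0 with hr
  have hr1 (i : Fin n) : r i + b i % 2 ≤ 1 := by simp only [hr]; split_ifs <;> omega
  have hsum : ∑ i, r i + oddCount b ≤ n := by
    simpa [oddCount, Finset.sum_add_distrib] using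
      Finset.sum_le_sum fun i (_ : i ∈ Finset.univ) => hr1 i
  -- `r` are the parities forced at the even entries; `j` more odd entries are made odd again
  set j := if ∑ i, r i = 0 then 2 else (∑ i, r i) % 2 with hj
  obtain ⟨g, hg, hgsum⟩ := exists_le_sum_eq (fun i => b i % 2) (j := j) (by
    change j ≤ oddCount b
    split_ifs at hj <;> omega)
  refine ⟨g + r, fun i => ?_, fun i hi => ?_, ?_⟩
  · have := hg i
    have := hr1 i
    simp only [Pi.add_apply]
    omega
  · have := hg i
    simp only [hr, Pi.add_apply, hi, if_true] at this ⊢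
    omega
  · simp only [Pi.add_apply, Finset.sum_add_distrib, hgsum]
    rw [Nat.even_iff] at hn hO ⊢
    split_ifs at hj <;> omega

theorem exists_digits_of_even_entry {b q : Fin n → ℕ} (hq : ∀ i, q i ≤ 1)
    (hqe : ∀ i, b i % 2 = 0 → q i = b i / 2 % 2) {p : Fin n} (hp : b p % 2 = 0) :
    ∃ ε : Fin n → ℕ, (∀ i, ε i ≤ 1) ∧ Even (∑ i, ε i) ∧ ∀ i, (b i + ε i) / 2 % 2 = q i := by
  set ε₀ : Fin n → ℕ := fun i => if b i % 2 = 1 then (b i / 2 + q i) % 2 else 0 with hε₀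
  set s := if Even (∑ i, ε₀ i) then 0 else 1 with hs
  have hs1 : s ≤ 1 := by simp only [hs]; split_ifs <;> omega
  have hdigit (i : Fin n) : ε₀ i + (if i = p then s else 0) ≤ 1 ∧
      (b i + (ε₀ i + if i = p then s else 0)) / 2 % 2 = q i := by
    simp only [hε₀]
    split_ifs with hodd hip hip
    · exact absurd (hip ▸ hp) (by omega)
    · simpa using ⟨mod_two_le_one _, half_add_digit_mod_two hodd (hq i)⟩
    · have := hqe i (by omega)
      omega
    · have := hqe i (by omega)
      omega
  refine ⟨fun i => ε₀ i + if i = p then s else 0, fun i => (hdigit i).1, ?_,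
    fun i => (hdigit i).2⟩
  rw [Finset.sum_add_distrib, Finset.sum_ite_eq' Finset.univ p, if_pos (Finset.mem_univ p)]
  simp only [hs]
  split_ifs with h
  · simpa using h
  · exact (Nat.not_even_iff_odd.mp h).add_one

theorem isNimZeroDiff_of_oddCount (hn : Even n) (b : Fin n → ℕ) (hO : Even (oddCount b))
    (h2 : 2 ≤ oddCount b) (hle : oddCount b ≤ n - 2) : IsNimZeroDiff b := by
  by_cases hsmall : ∀ i, b i ≤ 1
  · refine IsNimZeroDiff.of_half (ε := 0) (fun _ => zero_le_one) (by simp) hO ?_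
    convert isNimZeroDiff_zero using 1
    funext i
    have := hsmall i
    simp only [Pi.zero_apply]
    omega
  push Not at hsmall
  obtain ⟨p, hp⟩ : ∃ p, b p % 2 = 0 := by
    by_contra! h
    have := (oddCount_eq_iff b).mpr fun i => by have := h i; omega
    omega
  obtain ⟨q, hq, hqe, hqeven, hq2, hqle⟩ := exists_next_parities hn b hO h2 hle
  obtain ⟨ε, hε, hεeven, hεq⟩ := exists_digits_of_even_entry hq hqe hp
  have hcount : oddCount (fun i => (b i + ε i) / 2) = ∑ i, q i :=
    Finset.sum_congr rfl fun i _ => hεq i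
  have hdecr : ∑ i, (b i + ε i) / 2 < ∑ i, b i := by
    obtain ⟨i₀, hi₀⟩ := hsmall
    refine Finset.sum_lt_sum (fun i _ => by have := hε i; omega) ⟨i₀, Finset.mem_univ _, ?_⟩
    have := hε i₀
    omega
  exact IsNimZeroDiff.of_half hε hεeven hO <| isNimZeroDiff_of_oddCount hn _
    (hcount ▸ hqeven) (hcount ▸ hq2) (hcount ▸ hqle)
termination_by ∑ i, b i

theorem isNimZeroDiff_of_forall_odd (hn : Even n) (h4 : 4 ≤ n) (b : Fin n → ℕ)
    (hodd : ∀ i, b i % 2 = 1) (h : nimSum (List.ofFn b) % 4 = 0) : IsNimZeroDiff b := by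
  have hhalf : (∑ i, b i / 2) % 2 = 0 := by
    have := nimSum_ofFn_div_two b
    rw [← nimSum_ofFn_mod_two, ← this]
    omega
  obtain ⟨q, hq, hqsum⟩ := exists_le_sum_eq (fun _ : Fin n => 1) (j := 2) (by simp; omega)
  set ε : Fin n → ℕ := fun i => (b i / 2 + q i) % 2 with hε
  have hεeven : Even (∑ i, ε i) := by
    rw [Nat.even_iff, hε, ← Finset.sum_nat_mod, Finset.sum_add_distrib, hqsum]
    omega
  have hcount : oddCount (fun i => (b i + ε i) / 2) = 2 :=
    (Finset.sum_congr rfl fun i _ => half_add_digit_mod_two (hodd i) (hq i)).trans hqsum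
  have hO : oddCount b = n := (oddCount_eq_iff b).mpr hodd
  refine IsNimZeroDiff.of_half (fun i => mod_two_le_one _) hεeven (by rwa [hO]) ?_
  exact isNimZeroDiff_of_oddCount hn _ (by rw [hcount]; exact even_two) hcount.ge
    (by rw [hcount]; omega)

theorem isNimZeroDiff_of_mod_four (hn : Even n) (h4 : 4 ≤ n) (b : Fin n → ℕ)
    (hodd : ∃ i, b i % 2 = 1) (h : nimSum (List.ofFn b) % 4 = 0) : IsNimZeroDiff b := by
  have hO : oddCount b % 2 = 0 := by
    rw [oddCount_mod_two, ← nimSum_ofFn_mod_two]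
    omega
  have h1 : 1 ≤ oddCount b := by
    obtain ⟨i, hi⟩ := hodd
    exact hi ▸ Finset.single_le_sum (f := fun i => b i % 2) (fun _ _ => Nat.zero_le _)
      (Finset.mem_univ i)
  by_cases hle : oddCount b ≤ n - 2
  · exact isNimZeroDiff_of_oddCount hn b (Nat.even_iff.mpr hO) (by omega) hle
  · refine isNimZeroDiff_of_forall_odd hn h4 b ((oddCount_eq_iff b).mp ?_) h
    have := oddCount_le b
    rw [Nat.even_iff] at hn
    omega

end NimZeroDiff

theorem stmt15_general (n : ℕ) (heven : Even n) (hn : 4 ≤ n) (a : Fin n → ℕ)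
    (k : ℕ) (hk : ∀ i, 2 ^ k ∣ a i) (hkmax : ¬ ∀ i, 2 ^ (k + 1) ∣ a i)
    (hsmooth : (nimSum (List.ofFn a)).testBit k = false ∧
      (nimSum (List.ofFn a)).testBit (k + 1) = false) :
    ∃ t : Fin n → ℕ, (∀ i, a i ≤ t i) ∧
      nimSum (List.ofFn t) = 0 ∧
      nimSum (List.ofFn fun i => t i - a i) = 0 := by
  choose b hb using hk
  have hscale : nimSum (List.ofFn a) = 2 ^ k * nimSum (List.ofFn b) := by
    rw [← nimSum_ofFn_two_pow_mul, ← funext hb]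
  have hodd : ∃ i, b i % 2 = 1 := by
    by_contra! h
    refine hkmax fun i => ⟨b i / 2, ?_⟩
    rw [hb, pow_succ, mul_assoc]
    have := h i
    congr 1
    omega
  have hmod : nimSum (List.ofFn b) % 4 = 0 := by
    have h0 : (nimSum (List.ofFn b)).testBit 0 = false := by
      simpa [hscale, Nat.testBit_two_pow_mul] using hsmooth.1
    have h1 : (nimSum (List.ofFn b)).testBit 1 = false := by
      simpa [hscale, Nat.testBit_two_pow_mul] using hsmooth.2
    simp only [Nat.testBit_eq_decide_div_mod_eq, decide_eq_false_iff_not] at h0 h1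
    omega
  obtain ⟨x, hx, hbx⟩ := isNimZeroDiff_of_mod_four heven hn b hodd hmod
  refine ⟨fun i => a i + 2 ^ k * x i, fun i => Nat.le_add_right _ _, ?_, ?_⟩
  · simp only [hb, ← mul_add]
    rw [nimSum_ofFn_two_pow_mul]
    exact mul_eq_zero_of_right _ hbx
  · simp only [Nat.add_sub_cancel_left]
    rw [nimSum_ofFn_two_pow_mul, hx, mul_zero]

theorem stmt15 (n : ℕ) (heven : Even n) (hn : 4 ≤ n) (a : Fin n → ℕ)
    (hpos : ∃ i j, i ≠ j ∧ 0 < a i ∧ 0 < a j)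
    (k : ℕ) (hk : ∀ i, 2 ^ k ∣ a i) (hkmax : ¬ ∀ i, 2 ^ (k + 1) ∣ a i)
    (hsmooth : (nimSum (List.ofFn a)).testBit k = false ∧
      (nimSum (List.ofFn a)).testBit (k + 1) = false) :
    ∃ t : Fin n → ℕ, (∀ i, a i ≤ t i) ∧
      nimSum (List.ofFn t) = 0 ∧
      nimSum (List.ofFn fun i => t i - a i) = 0 :=
  stmt15_general n heven hn a k hk hkmax hsmooth
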